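/- Let g(n) be the Lie algebra over K (char 0) with generators p_1,…,p_n (n ≥ 3) and relations [p_i,[p_j,p_k]] = 0 for pairwise distinct i,j,k, and [p_i,[p_i,p_k]] − [p_j,[p_j,p_k]] = (r_j − r_i) p_k for i ≠ k, j ≠ k, where r_1,…,r_n ∈ K are pairwise distinct. Let L(n) ⊆ so_{n,1} ⊗ Q be the Lie subalgebra generated by Q_i = (E_{i,n+1}+E_{n+1,i}) ⊗ λ̂_i. Then there exists a surjective Lie algebra homomorphism φ : g(n) → L(n) with φ(p_i) = Q_i. -/

import Mathlib

/-!
`g(n)` is presented by generators and relations and `L(n)` is generated by the `Qᵢ`, so it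
suffices that the `Qᵢ` satisfy the relations of `g(n)`. With `Bᵢ = E_{i,n+1} + E_{n+1,i}` one
has `⁅Bⱼ, Bₖ⁆ = E_{jk} - E_{kj}`, hence `⁅Bᵢ, ⁅Bⱼ, Bₖ⁆⁆ = 0` for `i ∉ {j, k}` and
`⁅Bᵢ, ⁅Bᵢ, Bₖ⁆⁆ = Bₖ` for `i ≠ k`. Since `Qᵢ = λ̂ᵢ • Bᵢ`, the second relation becomes
`(λ̂ᵢ² - λ̂ⱼ²) λ̂ₖ • Bₖ = (rⱼ - rᵢ) • Qₖ`, which is the defining relation of the quotient ring.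
-/

open MvPolynomial Matrix FreeLieAlgebra

attribute [local instance 100] LieRing.ofAssociativeRing

/-- The Lie ideal of relations of `g(n)` inside the free Lie algebra on `p₁,…,pₙ`. -/
noncomputable def gRelIdeal (K : Type*) [CommRing K] (n : ℕ) (r : Fin n → K) :
    LieIdeal K (FreeLieAlgebra K (Fin n)) :=
  LieSubmodule.lieSpan K (FreeLieAlgebra K (Fin n))
    ({x | ∃ i j k : Fin n, i ≠ j ∧ j ≠ k ∧ i ≠ k ∧
        x = ⁅of K i, ⁅of K j, of K k⁆⁆} ∪
     {x | ∃ i j k : Fin n, i ≠ k ∧ j ≠ k ∧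
        x = ⁅of K i, ⁅of K i, of K k⁆⁆ - ⁅of K j, ⁅of K j, of K k⁆⁆
          - (r j - r i) • of K k})

namespace LieIdeal

variable {R L L' : Type*} [CommRing R] [LieRing L] [LieAlgebra R L] [LieRing L']
  [LieAlgebra R L'] (I : LieIdeal R L) (f : L →ₗ⁅R⁆ L') (h : I ≤ f.ker)

def liftQ : L ⧸ I →ₗ⁅R⁆ L' :=
  { I.toSubmodule.liftQ f.toLinearMap fun _ hx ↦ LieHom.mem_ker.mp (h hx) with
    map_lie' := by
      rintro ⟨x⟩ ⟨y⟩
      exact f.map_lie x y }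

@[simp]
theorem liftQ_mk (x : L) : I.liftQ f h (LieSubmodule.Quotient.mk' I x) = f x := rfl

theorem liftQ_surjective (hf : Function.Surjective f) : Function.Surjective (I.liftQ f h) :=
  fun y ↦ (hf y).elim fun x hx ↦ ⟨LieSubmodule.Quotient.mk' I x, hx⟩

end LieIdeal

namespace FreeLieAlgebra

variable {R L X : Type*} [CommRing R] [LieRing L] [LieAlgebra R L] (f : X → L)

noncomputable def liftToSpan : FreeLieAlgebra R X →ₗ⁅R⁆ LieSubalgebra.lieSpan R L (Set.range f) :=
  lift R fun x ↦ ⟨f x, LieSubalgebra.subset_lieSpan ⟨x, rfl⟩⟩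

theorem coe_liftToSpan_apply (a : FreeLieAlgebra R X) :
    (liftToSpan f a : L) = lift R f a := by
  have : (LieSubalgebra.lieSpan R L (Set.range f)).incl.comp (liftToSpan f) = lift R f :=
    hom_ext fun x ↦ by simp [liftToSpan]
  exact congr($this a)

theorem ker_liftToSpan : (liftToSpan (R := R) f).ker = (lift R f).ker := by
  ext a
  rw [LieHom.mem_ker, LieHom.mem_ker, ← coe_liftToSpan_apply, ZeroMemClass.coe_eq_zero]

theorem liftToSpan_surjective : Function.Surjective (liftToSpan (R := R) f) := by
  rintro ⟨y, hy⟩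
  have hle : LieSubalgebra.lieSpan R L (Set.range f) ≤ (lift R f).range := by
    rw [LieSubalgebra.lieSpan_le]
    rintro _ ⟨x, rfl⟩
    exact ⟨of R x, lift_of_apply f x⟩
  obtain ⟨a, ha⟩ := hle hy
  exact ⟨a, Subtype.ext <| (coe_liftToSpan_apply f a).trans ha⟩

end FreeLieAlgebra

theorem gRelIdeal_le_ker_lift {K L : Type*} [CommRing K] [LieRing L] [LieAlgebra K L] {n : ℕ}
    (r : Fin n → K) (f : Fin n → L)
    (hf₁ : ∀ i j k, i ≠ j → j ≠ k → i ≠ k → ⁅f i, ⁅f j, f k⁆⁆ = 0)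
    (hf₂ : ∀ i j k, i ≠ k → j ≠ k → ⁅f i, ⁅f i, f k⁆⁆ - ⁅f j, ⁅f j, f k⁆⁆ = (r j - r i) • f k) :
    gRelIdeal K n r ≤ (lift K f).ker := by
  rw [gRelIdeal, LieSubmodule.lieSpan_le]
  rintro _ (⟨i, j, k, hij, hjk, hik, rfl⟩ | ⟨i, j, k, hik, hjk, rfl⟩) <;>
    simp only [SetLike.mem_coe, LieHom.mem_ker, map_sub, map_smul, LieHom.map_lie, lift_of_apply]
  · exact hf₁ i j k hij hjk hik
  · exact sub_eq_zero.mpr (hf₂ i j k hik hjk)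

section Boost

variable (R : Type*) {m : Type*} [CommRing R] [Fintype m] [DecidableEq m]

def boost (i L : m) : Matrix m m R := single i L 1 + single L i 1

variable {R} {i j k L : m}

theorem lie_boost_boost (hiL : i ≠ L) (hkL : k ≠ L) :
    ⁅boost R i L, boost R k L⁆ = single i k 1 - single k i 1 := by
  rcases eq_or_ne i k with rfl | hik
  · simp
  · simp [boost, Ring.lie_def, add_mul, mul_add, single_mul_single_of_ne, hiL, hkL, hik,
      hiL.symm, hkL.symm, hik.symm]

theorem lie_boost_lie_boost_eq_zero (hij : i ≠ j) (hik : i ≠ k) (hjL : j ≠ L) (hkL : k ≠ L) :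
    ⁅boost R i L, ⁅boost R j L, boost R k L⁆⁆ = 0 := by
  rw [lie_boost_boost hjL hkL]
  simp [boost, Ring.lie_def, add_mul, mul_add, mul_sub, sub_mul, single_mul_single_of_ne, hij,
    hik, hjL, hkL, hij.symm, hik.symm, hjL.symm, hkL.symm]

theorem lie_boost_lie_boost_self (hik : i ≠ k) (hiL : i ≠ L) (hkL : k ≠ L) :
    ⁅boost R i L, ⁅boost R i L, boost R k L⁆⁆ = boost R k L := by
  rw [lie_boost_boost hiL hkL]
  simp [boost, Ring.lie_def, add_mul, mul_add, mul_sub, sub_mul, single_mul_single_of_ne, hik,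
    hik.symm, hiL, hkL, hiL.symm, hkL.symm, add_comm]

end Boost

theorem gRelIdeal_le_ker_lift_smul_boost {K A : Type*} [CommRing K] [CommRing A] [Algebra K A]
    {n : ℕ} (r : Fin n → K) (μ : Fin n → A)
    (hμ : ∀ i j, μ i ^ 2 - μ j ^ 2 + algebraMap K A (r i) - algebraMap K A (r j) = 0) :
    gRelIdeal K n r ≤ (lift K fun i ↦ μ i • boost A i.castSucc (Fin.last n)).ker := by
  have hne : ∀ i : Fin n, i.castSucc ≠ Fin.last n := fun i ↦ (Fin.castSucc_lt_last i).ne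
  refine gRelIdeal_le_ker_lift r _ (fun i j k hij _ hik ↦ ?_) (fun i j k hik hjk ↦ ?_)
  · simp only [lie_smul, smul_lie]
    rw [lie_boost_lie_boost_eq_zero (Fin.castSucc_injective n |>.ne hij)
      (Fin.castSucc_injective n |>.ne hik) (hne j) (hne k), smul_zero, smul_zero, smul_zero]
  · simp only [lie_smul, smul_lie, smul_smul]
    rw [lie_boost_lie_boost_self (Fin.castSucc_injective n |>.ne hik) (hne i) (hne k),
      lie_boost_lie_boost_self (Fin.castSucc_injective n |>.ne hjk) (hne j) (hne k),
      ← sub_smul, ← algebraMap_smul A (r j - r i), smul_smul]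
    congr 1
    rw [map_sub]
    linear_combination μ k * hμ i j

theorem stmt13_general {K : Type*} [RCLike K] (n : ℕ)
    (r : Fin n → K)
    (I : Ideal (MvPolynomial (Fin n) K))
    (hI : I = Ideal.span {P | ∃ i j : Fin n,
      P = X i ^ 2 - X j ^ 2 + MvPolynomial.C (r i) - MvPolynomial.C (r j)})
    (Q : Fin n → Matrix (Fin (n + 1)) (Fin (n + 1)) (MvPolynomial (Fin n) K ⧸ I))
    (hQ : ∀ i : Fin n, Q i = Ideal.Quotient.mk I (X i) •
      (Matrix.single i.castSucc (Fin.last n) (1 : MvPolynomial (Fin n) K ⧸ I)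
        + Matrix.single (Fin.last n) i.castSucc (1 : MvPolynomial (Fin n) K ⧸ I))) :
    ∃ φ : (FreeLieAlgebra K (Fin n) ⧸ gRelIdeal K n r) →ₗ⁅K⁆
        (LieSubalgebra.lieSpan K (Matrix (Fin (n + 1)) (Fin (n + 1)) (MvPolynomial (Fin n) K ⧸ I))
          (Set.range Q)),
      Function.Surjective φ ∧
      ∀ i : Fin n,
        ((φ (LieSubmodule.Quotient.mk' (gRelIdeal K n r) (of K i)) :
          LieSubalgebra.lieSpan K (Matrix (Fin (n + 1)) (Fin (n + 1)) (MvPolynomial (Fin n) K ⧸ I))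
            (Set.range Q)) :
          Matrix (Fin (n + 1)) (Fin (n + 1)) (MvPolynomial (Fin n) K ⧸ I)) = Q i := by
  have hμ : ∀ i j, Ideal.Quotient.mk I (X i) ^ 2 - Ideal.Quotient.mk I (X j) ^ 2
      + algebraMap K _ (r i) - algebraMap K _ (r j) = 0 := fun i j ↦ by
    rw [← Ideal.Quotient.mk_algebraMap, ← Ideal.Quotient.mk_algebraMap, algebraMap_eq, ← map_pow,
      ← map_pow, ← map_sub, ← map_add, ← map_sub, Ideal.Quotient.eq_zero_iff_mem, hI]
    exact Ideal.subset_span ⟨i, j, rfl⟩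
  have hker : gRelIdeal K n r ≤ (liftToSpan Q).ker := by
    rw [ker_liftToSpan, funext hQ]
    exact gRelIdeal_le_ker_lift_smul_boost r _ hμ
  refine ⟨(gRelIdeal K n r).liftQ (liftToSpan Q) hker,
    LieIdeal.liftQ_surjective _ _ _ (liftToSpan_surjective Q), fun i ↦ ?_⟩
  rw [LieIdeal.liftQ_mk, coe_liftToSpan_apply, lift_of_apply]

/-- there is a surjective Lie algebra homomorphism
`φ : g(n) → L(n)` with `φ(pᵢ) = Qᵢ`, where `g(n)` is the quotient of the free Lie
algebra on `p₁,…,pₙ` by the relations, and `L(n)` is the Lie subalgebra of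
`so_{n,1} ⊗ Q` (matrices over `Q = K[λ₁,…,λₙ]/(λᵢ²−λⱼ²+rᵢ−rⱼ)`) generated by the
elements `Qᵢ = λ̂ᵢ • (E_{i,n+1}+E_{n+1,i})`. -/
theorem stmt13 {K : Type*} [RCLike K] (n : ℕ) (hn : 3 ≤ n)
    (r : Fin n → K) (hr : Function.Injective r)
    (I : Ideal (MvPolynomial (Fin n) K))
    (hI : I = Ideal.span {P | ∃ i j : Fin n,
      P = X i ^ 2 - X j ^ 2 + MvPolynomial.C (r i) - MvPolynomial.C (r j)})
    (Q : Fin n → Matrix (Fin (n + 1)) (Fin (n + 1)) (MvPolynomial (Fin n) K ⧸ I))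
    (hQ : ∀ i : Fin n, Q i = Ideal.Quotient.mk I (X i) •
      (Matrix.single i.castSucc (Fin.last n) (1 : MvPolynomial (Fin n) K ⧸ I)
        + Matrix.single (Fin.last n) i.castSucc (1 : MvPolynomial (Fin n) K ⧸ I))) :
    ∃ φ : (FreeLieAlgebra K (Fin n) ⧸ gRelIdeal K n r) →ₗ⁅K⁆
        (LieSubalgebra.lieSpan K (Matrix (Fin (n + 1)) (Fin (n + 1)) (MvPolynomial (Fin n) K ⧸ I))
          (Set.range Q)),
      Function.Surjective φ ∧
      ∀ i : Fin n,
        ((φ (LieSubmodule.Quotient.mk' (gRelIdeal K n r) (of K i)) :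
          LieSubalgebra.lieSpan K (Matrix (Fin (n + 1)) (Fin (n + 1)) (MvPolynomial (Fin n) K ⧸ I))
            (Set.range Q)) :
          Matrix (Fin (n + 1)) (Fin (n + 1)) (MvPolynomial (Fin n) K ⧸ I)) = Q i :=
  stmt13_general n r I hI Q hQ
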